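/- arXiv:1303.7130 — 3 statements merged into one kernel-verified Lean document; each statement's English description precedes it below -/
import Mathlib

section
/- Let $0 < f < 1$, $r_0 > 1$, and $c \in \mathbb{R}$. Then there is at most one positive integer $n$ such that $(1 - f r_0^{-2n})(1 - f r_0^{2n}) = c^2$. -/
lemma aux_strict (f x y : ℝ) (hf0 : 0 < f) (hx : 1 < x) (hxy : x < y) :
    (1 - f * x⁻¹) * (1 - f * x) > (1 - f * y⁻¹) * (1 - f * y) := by
  have hx0 : 0 < x := by linarith
  have hy0 : 0 < y := by linarith
  have hkey : (1 - f * x⁻¹) * (1 - f * x) - (1 - f * y⁻¹) * (1 - f * y)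
      = f * (y - x) * (x * y - 1) / (x * y) := by
    field_simp
    ring
  have hpos : 0 < f * (y - x) * (x * y - 1) / (x * y) := by
    apply div_pos _ (mul_pos hx0 hy0)
    apply mul_pos (mul_pos hf0 (by linarith))
    nlinarith
  linarith

theorem stmt2 (f r0 c : ℝ) (hf0 : 0 < f) (hf1 : f < 1) (hr0 : 1 < r0) :
    ∀ m n : ℕ, 0 < m → 0 < n →
      (1 - f * r0 ^ (-(2 * (m : ℤ)))) * (1 - f * r0 ^ (2 * (m : ℤ))) = c ^ 2 →
      (1 - f * r0 ^ (-(2 * (n : ℤ)))) * (1 - f * r0 ^ (2 * (n : ℤ))) = c ^ 2 →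
      m = n := by
  have key : ∀ m n : ℕ, 0 < m → m < n →
      (1 - f * r0 ^ (-(2 * (m : ℤ)))) * (1 - f * r0 ^ (2 * (m : ℤ))) >
      (1 - f * r0 ^ (-(2 * (n : ℤ)))) * (1 - f * r0 ^ (2 * (n : ℤ))) := by
    intro m n hm hmn
    rw [zpow_neg, zpow_neg]
    exact aux_strict f (r0 ^ (2 * (m : ℤ))) (r0 ^ (2 * (n : ℤ))) hf0
      (one_lt_zpow₀ hr0 (by omega)) (zpow_lt_zpow_right₀ hr0 (by omega))
  intro m n hm hn h1 h2
  rcases lt_trichotomy m n with h | h | h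
  · exact absurd (h1.trans h2.symm) (ne_of_gt (key m n hm h))
  · exact h
  · exact absurd (h2.trans h1.symm) (ne_of_gt (key n m hn h))
end

section
/- Let $D = \{|x| < r_1\}$ and $\Omega = \{|x| < r_2\}$ be concentric disks in $\mathbb{R}^2$ with $0 < r_1 < r_2$, with scalar conductivities $\sigma_c$ in $D$, $\sigma_s$ in $\Omega \setminus D$, $\sigma_m$ in $\mathbb{R}^2 \setminus \Omega$ (all positive). Set $f = r_1^2/r_2^2$. If $(\sigma_s + \sigma_c)(\sigma_m - \sigma_s) + f(\sigma_s - \sigma_c)(\sigma_m + \sigma_s) = 0$, then for each unit vector $a$ the function $u$ defined by $u(x) = a\cdot x$ for $|x| \geq r_2$, $u(x) = \alpha\, a\cdot x + \beta\, \frac{a\cdot x}{|x|^2}$ for $r_1 \leq |x| \leq r_2$, and $u(x) = \gamma\, a\cdot x$ for $|x| \leq r_1$, with appropriate constants $\alpha, \beta, \gamma$, is continuous, harmonic in each region, and has continuous flux $\sigma \partial_\nu u$ across both interfaces; i.e., the coated disk is neutral to all uniform fields. -/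
/-! Writing `a·x = Re (conj a * x)` and `a·x / |x|² = Re (a / x)`, every piece of the potential
is the real part of `g x = c x + d / x`, holomorphic away from `0`, hence harmonic. Its normal
derivative `Dℜg(x) x = Re (x g'(x)) = Re (c x - d / x)` only flips the sign of the dipole term,
so the four transmission conditions are linear equations for `α, β, γ`: the two on `|x| = r2`
fix `α, β`, continuity on `|x| = r1` fixes `γ`, and the flux condition on `|x| = r1` is then
exactly the neutrality hypothesis. -/

/-- The Laplacian of a function `u : ℂ → ℝ`, viewing `ℂ ≅ ℝ²` with directions `1` and `I`. -/
noncomputable def lap (u : ℂ → ℝ) (z : ℂ) : ℝ :=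
  fderiv ℝ (fun w => fderiv ℝ u w 1) z 1 +
    fderiv ℝ (fun w => fderiv ℝ u w Complex.I) z Complex.I

open Complex ComplexConjugate Filter Topology ContinuousLinearMap

theorem HasDerivAt.fderiv_re_apply {g : ℂ → ℂ} {g' z : ℂ} (h : HasDerivAt g g' z) (v : ℂ) :
    fderiv ℝ (fun x => (g x).re) z v = (v * g').re := by
  have hre : HasFDerivAt (fun x => (g x).re)
      (reCLM.comp ((smulRight (1 : ℂ →L[ℂ] ℂ) g').restrictScalars ℝ)) z :=
    reCLM.hasFDerivAt.comp z (h.hasFDerivAt.restrictScalars ℝ)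
  rw [hre.fderiv]
  simp

theorem AnalyticAt.lap_re_eq_zero {g : ℂ → ℂ} {z : ℂ} (hg : AnalyticAt ℂ g z) :
    lap (fun x => (g x).re) z = 0 := by
  have hg'' : HasDerivAt (deriv g) (deriv (deriv g) z) z :=
    hg.deriv.differentiableAt.hasDerivAt
  have hfderiv (v : ℂ) :
      (fun w => fderiv ℝ (fun x => (g x).re) w v) =ᶠ[𝓝 z] fun w => (v * deriv g w).re := by
    filter_upwards [hg.eventually_analyticAt] with w hw
    exact hw.differentiableAt.hasDerivAt.fderiv_re_apply v
  rw [lap, (hfderiv 1).fderiv_eq, (hfderiv I).fderiv_eq, (hg''.const_mul 1).fderiv_re_apply,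
    (hg''.const_mul I).fderiv_re_apply]
  simp

theorem re_conj_mul_eq_dot (a x : ℂ) : (conj a * x).re = a.re * x.re + a.im * x.im := by
  simp

theorem re_div_eq_dot_div_sq_norm (a x : ℂ) :
    (a / x).re = (a.re * x.re + a.im * x.im) / ‖x‖ ^ 2 := by
  rw [div_re, Complex.sq_norm]; ring

theorem re_ofReal_mul_conj_mul (a x : ℂ) (s : ℝ) :
    (s * conj a * x).re = s * (a.re * x.re + a.im * x.im) := by
  rw [mul_assoc, re_ofReal_mul, re_conj_mul_eq_dot]

theorem re_ofReal_mul_div (a x : ℂ) (t : ℝ) :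
    (t * a / x).re = t * (a.re * x.re + a.im * x.im) / ‖x‖ ^ 2 := by
  rw [mul_div_assoc, re_ofReal_mul, re_div_eq_dot_div_sq_norm, mul_div_assoc]

theorem hasDerivAt_mul_add_div (c d : ℂ) {z : ℂ} (hz : z ≠ 0) :
    HasDerivAt (fun w => c * w + d / w) (c - d / z ^ 2) z := by
  simpa only [div_eq_mul_inv, sub_eq_add_neg, mul_neg, mul_one, inv_pow] using
    ((hasDerivAt_id' z).const_mul c).fun_add ((hasDerivAt_inv hz).const_mul d)

theorem analyticAt_mul_add_div (c d : ℂ) {z : ℂ} (hz : z ≠ 0) :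
    AnalyticAt ℂ (fun w => c * w + d / w) z :=
  (analyticAt_const.mul analyticAt_id).add (analyticAt_const.div analyticAt_id hz)

theorem fderiv_re_mul_apply_self (c x : ℂ) :
    fderiv ℝ (fun w => (c * w).re) x x = (c * x).re := by
  rw [((hasDerivAt_id' x).const_mul c).fderiv_re_apply, mul_one, mul_comm]

theorem fderiv_re_mul_add_div_apply_self (c d : ℂ) {x : ℂ} (hx : x ≠ 0) :
    fderiv ℝ (fun w => (c * w + d / w).re) x x = (c * x - d / x).re := by
  rw [(hasDerivAt_mul_add_div c d hx).fderiv_re_apply]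
  congr 1
  field_simp

theorem exists_neutral_coefficients {r1 r2 σc σs σm : ℝ} (hr1 : r1 ≠ 0) (hr2 : r2 ≠ 0)
    (hσs : σs ≠ 0)
    (hneutral : (σs + σc) * (σm - σs) + (r1 ^ 2 / r2 ^ 2) * (σs - σc) * (σm + σs) = 0) :
    ∃ α β γ : ℝ, α + β / r2 ^ 2 = 1 ∧ γ = α + β / r1 ^ 2 ∧
      σs * (α - β / r2 ^ 2) = σm ∧ σs * (α - β / r1 ^ 2) = σc * γ := by
  refine ⟨(σs + σm) / (2 * σs), r2 ^ 2 * (σs - σm) / (2 * σs), _, ?_, rfl, ?_, ?_⟩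
  · field_simp; ring
  · field_simp; ring
  · field_simp at hneutral ⊢
    linear_combination hneutral

theorem stmt7_general (r1 r2 σc σs σm : ℝ) (hr1 : 0 < r1) (hr12 : r1 < r2)
    (hσs : 0 < σs)
    (hneutral : (σs + σc) * (σm - σs) + (r1 ^ 2 / r2 ^ 2) * (σs - σc) * (σm + σs) = 0)
    (a : ℂ) :
    ∃ α β γ : ℝ,
      letI dot : ℂ → ℝ := fun x => a.re * x.re + a.im * x.im
      letI uout : ℂ → ℝ := fun x => dot x
      letI umid : ℂ → ℝ := fun x => α * dot x + β * dot x / ‖x‖ ^ 2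
      letI uin : ℂ → ℝ := fun x => γ * dot x
      -- continuity of the potential across the interfaces
      (∀ x : ℂ, ‖x‖ = r2 → umid x = uout x) ∧
      (∀ x : ℂ, ‖x‖ = r1 → uin x = umid x) ∧
      -- harmonicity in each region
      (∀ x : ℂ, r2 < ‖x‖ → lap uout x = 0) ∧
      (∀ x : ℂ, r1 < ‖x‖ → ‖x‖ < r2 → lap umid x = 0) ∧
      (∀ x : ℂ, ‖x‖ < r1 → lap uin x = 0) ∧
      -- continuity of the flux `σ ∂u/∂ν` across the interfaces (normal direction `x`)
      (∀ x : ℂ, ‖x‖ = r2 → σm * fderiv ℝ uout x x = σs * fderiv ℝ umid x x) ∧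
      (∀ x : ℂ, ‖x‖ = r1 → σs * fderiv ℝ umid x x = σc * fderiv ℝ uin x x) := by
  obtain ⟨α, β, γ, hcont, hγ, hflux_out, hflux_in⟩ :=
    exists_neutral_coefficients hr1.ne' (hr1.trans hr12).ne' hσs.ne' hneutral
  have hx_ne (x : ℂ) {r : ℝ} (hr : 0 < r) (hx : r ≤ ‖x‖) : x ≠ 0 :=
    norm_pos_iff.mp (hr.trans_le hx)
  have hout : (fun x : ℂ => a.re * x.re + a.im * x.im) = fun x => (conj a * x).re :=
    funext fun x => (re_conj_mul_eq_dot a x).symm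
  have hin : (fun x : ℂ => γ * (a.re * x.re + a.im * x.im)) = fun x => (γ * conj a * x).re :=
    funext fun x => (re_ofReal_mul_conj_mul a x γ).symm
  have hmid : (fun x : ℂ => α * (a.re * x.re + a.im * x.im)
      + β * (a.re * x.re + a.im * x.im) / ‖x‖ ^ 2) = fun x => (α * conj a * x + β * a / x).re := by
    funext x
    rw [add_re, re_ofReal_mul_conj_mul, re_ofReal_mul_div]
  beta_reduce
  refine ⟨α, β, γ, fun x hx => ?_, fun x hx => ?_, fun x _ => ?_, fun x hx _ => ?_, fun x _ => ?_,
    fun x hx => ?_, fun x hx => ?_⟩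
  · rw [hx]
    linear_combination (a.re * x.re + a.im * x.im) * hcont
  · rw [hx]
    linear_combination (a.re * x.re + a.im * x.im) * hγ
  · rw [hout]; exact (analyticAt_const.mul analyticAt_id).lap_re_eq_zero
  · rw [hmid]; exact analyticAt_mul_add_div _ _ (hx_ne x hr1 hx.le) |>.lap_re_eq_zero
  · rw [hin]; exact (analyticAt_const.mul analyticAt_id).lap_re_eq_zero
  · rw [hmid, hout, fderiv_re_mul_apply_self,
      fderiv_re_mul_add_div_apply_self _ _ (hx_ne x (hr1.trans hr12) hx.ge), sub_re,
      re_conj_mul_eq_dot, re_ofReal_mul_conj_mul, re_ofReal_mul_div, hx]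
    linear_combination -(a.re * x.re + a.im * x.im) * hflux_out
  · rw [hmid, hin, fderiv_re_mul_apply_self,
      fderiv_re_mul_add_div_apply_self _ _ (hx_ne x hr1 hx.ge), sub_re, re_ofReal_mul_conj_mul,
      re_ofReal_mul_conj_mul, re_ofReal_mul_div, hx]
    linear_combination (a.re * x.re + a.im * x.im) * hflux_in

theorem stmt7 (r1 r2 σc σs σm : ℝ) (hr1 : 0 < r1) (hr12 : r1 < r2)
    (hσc : 0 < σc) (hσs : 0 < σs) (hσm : 0 < σm)
    (hneutral : (σs + σc) * (σm - σs) + (r1 ^ 2 / r2 ^ 2) * (σs - σc) * (σm + σs) = 0)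
    (a : ℂ) (ha : ‖a‖ = 1) :
    ∃ α β γ : ℝ,
      letI dot : ℂ → ℝ := fun x => a.re * x.re + a.im * x.im
      letI uout : ℂ → ℝ := fun x => dot x
      letI umid : ℂ → ℝ := fun x => α * dot x + β * dot x / ‖x‖ ^ 2
      letI uin : ℂ → ℝ := fun x => γ * dot x
      -- continuity of the potential across the interfaces
      (∀ x : ℂ, ‖x‖ = r2 → umid x = uout x) ∧
      (∀ x : ℂ, ‖x‖ = r1 → uin x = umid x) ∧
      -- harmonicity in each region
      (∀ x : ℂ, r2 < ‖x‖ → lap uout x = 0) ∧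
      (∀ x : ℂ, r1 < ‖x‖ → ‖x‖ < r2 → lap umid x = 0) ∧
      (∀ x : ℂ, ‖x‖ < r1 → lap uin x = 0) ∧
      -- continuity of the flux `σ ∂u/∂ν` across the interfaces (normal direction `x`)
      (∀ x : ℂ, ‖x‖ = r2 → σm * fderiv ℝ uout x x = σs * fderiv ℝ umid x x) ∧
      (∀ x : ℂ, ‖x‖ = r1 → σs * fderiv ℝ umid x x = σc * fderiv ℝ uin x x) :=
  stmt7_general r1 r2 σc σs σm hr1 hr12 hσs hneutral a
end

section
/- Let $g$ be holomorphic on the annulus $A = \{1 < |\zeta| < r_0\}$ and continuous on $\overline{A}$. Suppose there exist real numbers $f \in (0,1)$ and $\kappa$, and complex numbers $a, b$, such that $g(\zeta) = f\,\overline{a\zeta + b\zeta^{-1}}$ on $|\zeta| = r_0$ and $g(\zeta) = \overline{a\zeta + b\zeta^{-1}} + \kappa(a\zeta + b\zeta^{-1})$ on $|\zeta| = 1$. Then the Laurent coefficients $c_n$ of $g$ satisfy: $c_1 = f\bar{b}r_0^{-2} = \bar{b} + \kappa a$, $c_{-1} = f\bar{a}r_0^{2} = \bar{a} + \kappa b$,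 and $c_n = 0$ for $|n| \neq 1$. -/
/-!
On a circle `|z| = R` inside the annulus, integrating the Laurent series termwise gives
`∮ z ^ (-n - 1) g(z) dz = 2πi c n`. Since `g` is continuous on the closed annulus, this circle
integral is continuous in `R ∈ [1, r0]`, so the identity persists on both boundary circles. There
`conj z = R² / z`, so `g` is the Laurent polynomial `u z⁻¹ + v z` with explicit `u, v`, and the
same integral reads off its coefficients.
-/

open Complex Metric Set Real MeasureTheory ComplexConjugate

theorem circleIntegral_zpow_eq_ite {R : ℝ} (hR : R ≠ 0) (n : ℤ) :
    (∮ z in C(0, R), z ^ n) = if n = -1 then 2 * π * I else 0 := by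
  split_ifs with hn
  · subst hn
    simpa using circleIntegral.integral_sub_center_inv 0 hR
  · simpa using circleIntegral.integral_sub_zpow_of_ne hn 0 0 R

theorem circleIntegral_zpow_mul_of_hasSum {R : ℝ} (hR : 0 < R) {c : ℤ → ℂ} {F : ℂ → ℂ}
    (hF : ∀ z ∈ sphere (0 : ℂ) R, HasSum (fun m => c m * z ^ m) (F z)) (n : ℤ) :
    (∮ z in C(0, R), z ^ (-n - 1) * F z) = 2 * π * I * c n := by
  have hsummable : Summable fun m => ‖c m‖ * R ^ m := by
    have := (hF R (by simp [hR.le])).summable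
    simpa [norm_mul, norm_zpow, abs_of_pos hR] using summable_norm_iff.mpr this
  have hterm : ∀ m, (∮ z in C(0, R), z ^ (-n - 1) * (c m * z ^ m))
      = if m = n then 2 * π * I * c n else 0 := by
    intro m
    have hpow : EqOn (fun z : ℂ => z ^ (-n - 1) * (c m * z ^ m))
        (fun z => c m * z ^ (m - n - 1)) (sphere 0 R) := fun z hz => by
      have hz0 : z ≠ 0 := ne_of_mem_sphere hz hR.ne'
      simp only [mul_left_comm _ (c m), ← zpow_add₀ hz0]
      ring_nf
    rw [circleIntegral.integral_congr hR.le hpow, circleIntegral.integral_const_mul,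
      circleIntegral_zpow_eq_ite hR.ne']
    simp only [show m - n - 1 = -1 ↔ m = n by omega]
    split_ifs with h
    · rw [h]; ring
    · ring
  have hsum : HasSum (fun m => ∮ z in C(0, R), z ^ (-n - 1) * (c m * z ^ m))
      (∮ z in C(0, R), z ^ (-n - 1) * F z) := by
    have hzpow : ∀ k : ℤ, Continuous fun θ => circleMap 0 R θ ^ k := fun k =>
      (continuous_circleMap 0 R).zpow₀ k fun _ => .inl (circleMap_ne_center hR.ne')
    refine intervalIntegral.hasSum_integral_of_dominated_convergence
      (fun m _ => R * (R ^ (-n - 1) * (‖c m‖ * R ^ m))) (fun m => ?_) (fun m => ?_) ?_ ?_ ?_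
    · simp only [deriv_circleMap]
      exact Continuous.aestronglyMeasurable (by fun_prop)
    · refine ae_of_all _ fun θ _ => ?_
      simp [norm_zpow, abs_of_pos hR]
    · exact ae_of_all _ fun θ _ => (hsummable.mul_left _).mul_left _
    · exact intervalIntegrable_const
    · refine ae_of_all _ fun θ _ => ?_
      exact ((hF _ (circleMap_mem_sphere 0 hR.le θ)).mul_left _).mul_left _
  rw [← hsum.tsum_eq]
  simp_rw [hterm]
  exact tsum_ite_eq n _

theorem circleMap_mem_closure_annulus {r₁ r₂ R : ℝ} (h₀ : 0 ≤ r₁) (h₁₂ : r₁ < r₂)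
    (hR : R ∈ Icc r₁ r₂) (θ : ℝ) :
    circleMap 0 R θ ∈ closure {z : ℂ | r₁ < ‖z‖ ∧ ‖z‖ < r₂} := by
  have hmaps : MapsTo (circleMap 0 · θ) (Ioo r₁ r₂) {z : ℂ | r₁ < ‖z‖ ∧ ‖z‖ < r₂} :=
    fun t ht => by simpa [norm_circleMap_zero, abs_of_pos (h₀.trans_lt ht.1)] using ht
  refine hmaps.closure (by fun_prop) ?_
  rwa [closure_Ioo h₁₂.ne]

theorem continuousOn_circleIntegral_radius {E : Type*} [NormedAddCommGroup E] [NormedSpace ℂ E]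
    {r₁ r₂ : ℝ} (h₀ : 0 ≤ r₁) (h₁₂ : r₁ < r₂) {F : ℂ → E}
    (hF : ContinuousOn F (closure {z : ℂ | r₁ < ‖z‖ ∧ ‖z‖ < r₂})) :
    ContinuousOn (fun R => ∮ z in C(0, R), F z) (Icc r₁ r₂) := by
  rw [continuousOn_iff_continuous_domRestrict]
  refine intervalIntegral.continuous_parametric_intervalIntegral_of_continuous'
    (f := fun (R : Icc r₁ r₂) θ => deriv (circleMap 0 R) θ • F (circleMap 0 R θ)) ?_ 0 (2 * π)
  simp only [deriv_circleMap]
  refine Continuous.smul (by fun_prop) (hF.comp_continuous (by fun_prop) fun p => ?_)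
  exact circleMap_mem_closure_annulus h₀ h₁₂ p.1.2 p.2

theorem laurentCoeff_eq_of_hasSum_on_sphere {r₁ r₂ : ℝ} (h₀ : 0 < r₁) (h₁₂ : r₁ < r₂)
    {g : ℂ → ℂ} (hg : ContinuousOn g (closure {z : ℂ | r₁ < ‖z‖ ∧ ‖z‖ < r₂}))
    {c : ℤ → ℂ} (hc : ∀ z : ℂ, r₁ < ‖z‖ → ‖z‖ < r₂ → HasSum (fun n => c n * z ^ n) (g z))
    {R : ℝ} (hR : R ∈ Icc r₁ r₂) {d : ℤ → ℂ}
    (hd : ∀ z ∈ sphere (0 : ℂ) R, HasSum (fun n => d n * z ^ n) (g z)) : c = d := by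
  funext n
  have hclosure : closure {z : ℂ | r₁ < ‖z‖ ∧ ‖z‖ < r₂} ⊆ {z | r₁ ≤ ‖z‖} :=
    closure_minimal (fun z hz => hz.1.le) (isClosed_le continuous_const continuous_norm)
  have hcont : ContinuousOn (fun z : ℂ => z ^ (-n - 1) * g z)
      (closure {z : ℂ | r₁ < ‖z‖ ∧ ‖z‖ < r₂}) := by
    refine ContinuousOn.mul (fun z hz => ?_) hg
    refine (continuousAt_zpow₀ z _ (.inl ?_)).continuousWithinAt
    exact norm_pos_iff.mp (h₀.trans_le (hclosure hz))
  have hconst : EqOn (fun R => ∮ z in C(0, R), z ^ (-n - 1) * g z) (fun _ => 2 * π * I * c n)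
      (Icc r₁ r₂) := by
    refine EqOn.of_subset_closure (s := Ioo r₁ r₂) (fun R hR => ?_)
      (continuousOn_circleIntegral_radius h₀.le h₁₂ hcont) continuousOn_const Ioo_subset_Icc_self
      (closure_Ioo h₁₂.ne).ge
    refine circleIntegral_zpow_mul_of_hasSum (h₀.trans hR.1) (fun z hz => ?_) n
    rw [mem_sphere_zero_iff_norm] at hz
    exact hc z (hz ▸ hR.1) (hz ▸ hR.2)
  have h := (hconst hR).symm.trans
    (circleIntegral_zpow_mul_of_hasSum (h₀.trans_le hR.1) hd n)
  exact mul_left_cancel₀ two_pi_I_ne_zero h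

theorem hasSum_single_neg_one_add_single_one (u v z : ℂ) :
    HasSum (fun n : ℤ => (Pi.single (-1) u + Pi.single 1 v : ℤ → ℂ) n * z ^ n)
      (u * z⁻¹ + v * z) := by
  have h := (hasSum_pi_single (-1) (u * z ^ (-1 : ℤ))).add (hasSum_pi_single 1 (v * z ^ (1 : ℤ)))
  rw [zpow_neg_one, zpow_one] at h
  convert h using 2 with n
  simp only [Pi.add_apply, add_mul, Pi.single_apply]
  split_ifs <;> simp_all

theorem conj_mul_add_mul_inv_of_norm_eq {z : ℂ} {R : ℝ} (hz : ‖z‖ = R) (a b : ℂ) :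
    conj (a * z + b * z⁻¹) = conj a * R ^ (2 : ℤ) * z⁻¹ + conj b * R ^ (-2 : ℤ) * z := by
  rcases eq_or_ne z 0 with rfl | hz0
  · simp
  have hconj : conj z = R ^ 2 * z⁻¹ := by
    rw [eq_mul_inv_iff_mul_eq₀ hz0, mul_comm, mul_conj', hz]
  simp only [map_add, map_mul, map_inv₀, hconj, zpow_neg, zpow_ofNat, mul_inv, inv_inv]
  ring

theorem stmt15_general (r0 : ℝ) (hr0 : 1 < r0) (g : ℂ → ℂ)
    (hcont : ContinuousOn g (closure {ζ : ℂ | 1 < ‖ζ‖ ∧ ‖ζ‖ < r0}))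
    (f κ : ℝ) (a b : ℂ)
    (hbdry0 : ∀ ζ : ℂ, ‖ζ‖ = r0 → g ζ = (f : ℂ) * conj (a * ζ + b * ζ⁻¹))
    (hbdry1 : ∀ ζ : ℂ, ‖ζ‖ = 1 →
      g ζ = conj (a * ζ + b * ζ⁻¹) + (κ : ℂ) * (a * ζ + b * ζ⁻¹))
    (c : ℤ → ℂ)
    (hc : ∀ ζ : ℂ, 1 < ‖ζ‖ → ‖ζ‖ < r0 →
      HasSum (fun n : ℤ => c n * ζ ^ n) (g ζ)) :
    c 1 = (f : ℂ) * conj b * ((r0 : ℂ) ^ (-2 : ℤ)) ∧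
    c 1 = conj b + (κ : ℂ) * a ∧
    c (-1) = (f : ℂ) * conj a * ((r0 : ℂ) ^ (2 : ℤ)) ∧
    c (-1) = conj a + (κ : ℂ) * b ∧
    ∀ n : ℤ, n ≠ 1 → n ≠ -1 → c n = 0 := by
  have houter : c = Pi.single (-1) (f * conj a * (r0 : ℂ) ^ (2 : ℤ))
      + Pi.single 1 (f * conj b * (r0 : ℂ) ^ (-2 : ℤ)) := by
    refine laurentCoeff_eq_of_hasSum_on_sphere one_pos hr0 hcont hc ⟨hr0.le, le_rfl⟩
      fun z hz => ?_
    rw [mem_sphere_zero_iff_norm] at hz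
    convert hasSum_single_neg_one_add_single_one _ _ z using 1
    rw [hbdry0 z hz, conj_mul_add_mul_inv_of_norm_eq hz]
    ring
  have hinner : c = Pi.single (-1) (conj a + κ * b) + Pi.single 1 (conj b + κ * a) := by
    refine laurentCoeff_eq_of_hasSum_on_sphere one_pos hr0 hcont hc ⟨le_rfl, hr0.le⟩
      fun z hz => ?_
    rw [mem_sphere_zero_iff_norm] at hz
    convert hasSum_single_neg_one_add_single_one _ _ z using 1
    rw [hbdry1 z hz, conj_mul_add_mul_inv_of_norm_eq hz]
    push_cast
    ring
  refine ⟨?_, ?_, ?_, ?_, fun n h₁ h₂ => ?_⟩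
  · simp [houter]
  · simp [hinner]
  · simp [houter]
  · simp [hinner]
  · simp [hinner, h₁, h₂]

theorem stmt15 (r0 : ℝ) (hr0 : 1 < r0) (g : ℂ → ℂ)
    (hhol : DifferentiableOn ℂ g {ζ : ℂ | 1 < ‖ζ‖ ∧ ‖ζ‖ < r0})
    (hcont : ContinuousOn g (closure {ζ : ℂ | 1 < ‖ζ‖ ∧ ‖ζ‖ < r0}))
    (f κ : ℝ) (hf0 : 0 < f) (hf1 : f < 1) (a b : ℂ)
    (hbdry0 : ∀ ζ : ℂ, ‖ζ‖ = r0 → g ζ = (f : ℂ) * conj (a * ζ + b * ζ⁻¹))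
    (hbdry1 : ∀ ζ : ℂ, ‖ζ‖ = 1 →
      g ζ = conj (a * ζ + b * ζ⁻¹) + (κ : ℂ) * (a * ζ + b * ζ⁻¹))
    (c : ℤ → ℂ)
    (hc : ∀ ζ : ℂ, 1 < ‖ζ‖ → ‖ζ‖ < r0 →
      HasSum (fun n : ℤ => c n * ζ ^ n) (g ζ)) :
    c 1 = (f : ℂ) * conj b * ((r0 : ℂ) ^ (-2 : ℤ)) ∧
    c 1 = conj b + (κ : ℂ) * a ∧
    c (-1) = (f : ℂ) * conj a * ((r0 : ℂ) ^ (2 : ℤ)) ∧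
    c (-1) = conj a + (κ : ℂ) * b ∧
    ∀ n : ℤ, n ≠ 1 → n ≠ -1 → c n = 0 :=
  stmt15_general r0 hr0 g hcont f κ a b hbdry0 hbdry1 c hc
end
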